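/- arXiv:2207.02552 — 3 statements merged into one kernel-verified Lean document; each statement's English description precedes it below -/
import Mathlib

section
/- Let a, a' be complex sequences of length N and b, b' unimodular complex sequences of length P. Set c = a⊗b and c' = a'⊗b' (Kronecker products, sequences of length NP). Then for 0 ≤ k < P and -N < j < N, the aperiodic cross-correlation satisfies Λ(c,c')(Pj+k) = Λ(a,a')(j)·Λ(b,b')(k) + Λ(a,a')(j+1)·Λ(b,b')(k-P). -/
open Finset

/-- Aperiodic cross-correlation of length-`L` sequences `x, y` at integer shift `τ`. -/
noncomputable def acc (L : ℕ) (x y : ℕ → ℂ) (τ : ℤ) : ℂ :=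
  if 0 ≤ τ ∧ τ < (L : ℤ) then
    ∑ i ∈ Finset.range (L - τ.toNat), x (i + τ.toNat) * (starRingEnd ℂ) (y i)
  else if -(L : ℤ) < τ ∧ τ < 0 then
    ∑ i ∈ Finset.range (L - (-τ).toNat), x i * (starRingEnd ℂ) (y (i + (-τ).toNat))
  else 0

/-- Aperiodic autocorrelation. -/
noncomputable def aac (L : ℕ) (x : ℕ → ℂ) (τ : ℤ) : ℂ := acc L x x τ

/-- Kronecker product of a sequence with a length-`P` sequence: `(a ⊗ b)_(nP+p) = a_n b_p`. -/
noncomputable def kron (P : ℕ) (a b : ℕ → ℂ) : ℕ → ℂ := fun n => a (n / P) * b (n % P)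

/-- Aperiodic cross-correlation sum of two codes (row-wise sum). -/
noncomputable def ccs {M : ℕ} (L : ℕ) (A B : Fin M → ℕ → ℂ) (τ : ℤ) : ℂ :=
  ∑ ν, acc L (A ν) (B ν) τ

lemma acc_natCast (L t : ℕ) (x y : ℕ → ℂ) :
    acc L x y (t : ℤ) = ∑ i ∈ Finset.range (L - t), x (i + t) * (starRingEnd ℂ) (y i) := by
  unfold acc
  rcases lt_or_ge t L with h | h
  · rw [if_pos ⟨Int.ofNat_nonneg t, by exact_mod_cast h⟩]
    simp
  · rw [if_neg (by omega), if_neg (by omega), Nat.sub_eq_zero_of_le h]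
    simp

lemma acc_neg_natCast (L t : ℕ) (x y : ℕ → ℂ) :
    acc L x y (-(t : ℤ)) = ∑ i ∈ Finset.range (L - t), x i * (starRingEnd ℂ) (y (i + t)) := by
  rcases Nat.eq_zero_or_pos t with rfl | ht
  · rw [show -((0:ℕ):ℤ) = ((0:ℕ):ℤ) by simp, acc_natCast]
    simp
  · unfold acc
    rcases lt_or_ge t L with h | h
    · rw [if_neg (by omega), if_pos ⟨by omega, by omega⟩]
      simp
    · rw [if_neg (by omega), if_neg (by omega), Nat.sub_eq_zero_of_le h]
      simp

lemma acc_conj (L t : ℕ) (x y : ℕ → ℂ) :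
    acc L x y (-(t : ℤ)) = (starRingEnd ℂ) (acc L y x (t : ℤ)) := by
  rw [acc_natCast, acc_neg_natCast, map_sum]
  refine Finset.sum_congr rfl fun i _ => ?_
  simp [mul_comm]

lemma sum_range_mul' (f : ℕ → ℂ) (m P : ℕ) :
    ∑ i ∈ Finset.range (m * P), f i = ∑ n ∈ Finset.range m, ∑ p ∈ Finset.range P, f (n * P + p) := by
  induction m with
  | zero => simp
  | succ m ih => rw [Nat.succ_mul, Finset.sum_range_add, ih, Finset.sum_range_succ]

lemma kron_eval {P : ℕ} (a b : ℕ → ℂ) (n p : ℕ) (hp : p < P) :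
    kron P a b (n * P + p) = a n * b p := by
  unfold kron
  rw [show n * P + p = p + P * n by ring, Nat.add_mul_div_left _ _ (by omega : 0 < P),
    Nat.add_mul_mod_self_left, Nat.div_eq_of_lt hp, Nat.mod_eq_of_lt hp, Nat.zero_add]

lemma pos_case (N P : ℕ) (a a' b b' : ℕ → ℂ) (j k : ℕ) (hj : j < N) (hk : k < P) :
    acc (N * P) (kron P a b) (kron P a' b') ((P * j + k : ℕ) : ℤ) =
      acc N a a' (j : ℤ) * acc P b b' (k : ℤ) +
        acc N a a' ((j : ℤ) + 1) * acc P b b' ((k : ℤ) - P) := by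
  obtain ⟨m, rfl⟩ : ∃ m, N = j + 1 + m := ⟨N - j - 1, by omega⟩
  -- rewrite all four acc's on the RHS
  have h1 : acc (j + 1 + m) a a' (j : ℤ) =
      ∑ n ∈ Finset.range (m + 1), a (n + j) * (starRingEnd ℂ) (a' n) := by
    rw [acc_natCast, show j + 1 + m - j = m + 1 by omega]
  have h2 : acc P b b' (k : ℤ) =
      ∑ p ∈ Finset.range (P - k), b (p + k) * (starRingEnd ℂ) (b' p) := acc_natCast P k b b'
  have h3 : acc (j + 1 + m) a a' ((j : ℤ) + 1) =
      ∑ n ∈ Finset.range m, a (n + (j + 1)) * (starRingEnd ℂ) (a' n) := by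
    rw [show (j : ℤ) + 1 = ((j + 1 : ℕ) : ℤ) by push_cast; ring, acc_natCast,
      show j + 1 + m - (j + 1) = m by omega]
  have h4 : acc P b b' ((k : ℤ) - P) =
      ∑ q ∈ Finset.range k, b q * (starRingEnd ℂ) (b' (q + (P - k))) := by
    rw [show (k : ℤ) - P = -(((P - k : ℕ)) : ℤ) by push_cast [Nat.le_of_lt hk]; ring,
      acc_neg_natCast, show P - (P - k) = k by omega]
  rw [h1, h2, h3, h4, acc_natCast]
  have hM : (j + 1 + m) * P - (P * j + k) = m * P + (P - k) := by
    have h : (j + 1 + m) * P = (m * P + (P - k)) + (P * j + k) := by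
      rw [show (m * P + (P - k)) + (P * j + k) = m * P + P * j + ((P - k) + k) by ring,
        show (P - k) + k = P by omega]
      ring
    omega
  rw [hM]
  set f : ℕ → ℂ := fun i =>
    kron P a b (i + (P * j + k)) * (starRingEnd ℂ) (kron P a' b' i) with hf
  have key1 : ∀ n p, p < P - k →
      f (n * P + p) = (a (n + j) * (starRingEnd ℂ) (a' n)) *
        (b (p + k) * (starRingEnd ℂ) (b' p)) := by
    intro n p hp
    have e1 : n * P + p + (P * j + k) = (n + j) * P + (p + k) := by ring
    rw [hf]
    simp only
    rw [e1, kron_eval a b _ _ (by omega), kron_eval a' b' _ _ (by omega), map_mul]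
    ring
  have key2 : ∀ n q, q < k →
      f (n * P + ((P - k) + q)) = (a (n + (j + 1)) * (starRingEnd ℂ) (a' n)) *
        (b q * (starRingEnd ℂ) (b' (q + (P - k)))) := by
    intro n q hq
    have e1 : n * P + ((P - k) + q) + (P * j + k) = (n + (j + 1)) * P + q := by
      have : (P - k) + k = P := by omega
      calc n * P + ((P - k) + q) + (P * j + k)
          = n * P + P * j + q + ((P - k) + k) := by ring
        _ = n * P + P * j + q + P := by rw [this]
        _ = (n + (j + 1)) * P + q := by ring
    rw [hf]
    simp only
    rw [e1, kron_eval a b _ _ (by omega), kron_eval a' b' _ _ (by omega),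
      show (P - k) + q = q + (P - k) by ring, map_mul]
    ring
  -- decompose the LHS sum
  rw [Finset.sum_range_add, sum_range_mul']
  have split : ∀ n, ∑ p ∈ Finset.range P, f (n * P + p) =
      (∑ p ∈ Finset.range (P - k), f (n * P + p)) +
        ∑ q ∈ Finset.range k, f (n * P + ((P - k) + q)) := by
    intro n
    have h := Finset.sum_range_add (fun p => f (n * P + p)) (P - k) k
    rw [show P - k + k = P by omega] at h
    exact h
  rw [Finset.sum_congr rfl (fun n _ => split n), Finset.sum_add_distrib]
  rw [Finset.sum_mul_sum, Finset.sum_mul_sum]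
  rw [show (∑ p ∈ Finset.range (P - k), f (m * P + p)) =
      ∑ p ∈ Finset.range (P - k),
        (a (m + j) * (starRingEnd ℂ) (a' m)) * (b (p + k) * (starRingEnd ℂ) (b' p)) from
    Finset.sum_congr rfl fun p hp => key1 m p (Finset.mem_range.mp hp)]
  rw [Finset.sum_congr rfl (fun n hn => Finset.sum_congr rfl fun p hp =>
    key1 n p (Finset.mem_range.mp hp))]
  rw [Finset.sum_congr rfl (fun n hn => Finset.sum_congr rfl fun q hq =>
    key2 n q (Finset.mem_range.mp hq))]
  rw [Finset.sum_range_succ]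
  ring

theorem stmt1 (N P : ℕ) (a a' b b' : ℕ → ℂ)
    (hb : ∀ p < P, ‖b p‖ = 1) (hb' : ∀ p < P, ‖b' p‖ = 1)
    (c c' : ℕ → ℂ) (hc : c = kron P a b) (hc' : c' = kron P a' b')
    (k : ℕ) (hk : k < P) (j : ℤ) (hj1 : -(N : ℤ) < j) (hj2 : j < (N : ℤ)) :
    acc (N * P) c c' ((P : ℤ) * j + k) =
      acc N a a' j * acc P b b' k + acc N a a' (j + 1) * acc P b b' ((k : ℤ) - P) := by
  subst hc hc'
  rcases le_or_gt 0 j with hj0 | hj0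
  · -- nonnegative shift
    obtain ⟨jn, rfl⟩ : ∃ jn : ℕ, j = (jn : ℤ) := ⟨j.toNat, by omega⟩
    have hjn : jn < N := by exact_mod_cast hj2
    have := pos_case N P a a' b b' jn k hjn hk
    rw [show ((P * jn + k : ℕ) : ℤ) = (P : ℤ) * jn + k by push_cast; ring] at this
    exact this
  · -- negative shift: use conjugation symmetry
    rcases Nat.eq_zero_or_pos k with rfl | hkpos
    · -- k = 0
      obtain ⟨jn, hjn⟩ : ∃ jn : ℕ, j = -(jn : ℤ) := ⟨(-j).toNat, by omega⟩
      subst hjn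
      have hjn1 : 1 ≤ jn := by omega
      have hjn2 : jn < N := by omega
      have hpos := pos_case N P a' a b' b jn 0 hjn2 hk
      have hL : (P : ℤ) * (-(jn : ℤ)) + (0 : ℕ) = -((P * jn + 0 : ℕ) : ℤ) := by
        push_cast; ring
      rw [hL, acc_conj, hpos, map_add, map_mul, map_mul]
      have c1 : (starRingEnd ℂ) (acc N a' a ((jn : ℕ) : ℤ)) = acc N a a' (-(jn : ℤ)) :=
        (acc_conj N jn a a').symm
      have c2 : (starRingEnd ℂ) (acc P b' b ((0 : ℕ) : ℤ)) = acc P b b' ((0 : ℕ) : ℤ) := by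
        have := acc_conj P 0 b b'
        simp only [Nat.cast_zero, neg_zero] at this ⊢
        exact this.symm
      have z1 : acc P b' b ((0 : ℕ) - (P : ℤ)) = 0 := by
        rw [show ((0 : ℕ) : ℤ) - P = -((P : ℕ) : ℤ) by push_cast; ring, acc_neg_natCast]
        simp
      have z2 : acc P b b' (((0:ℕ) : ℤ) - P) = 0 := by
        rw [show ((0 : ℕ) : ℤ) - P = -((P : ℕ) : ℤ) by push_cast; ring, acc_neg_natCast]
        simp
      rw [z1, c1, c2, z2]
      simp
    · -- k ≥ 1
      obtain ⟨jn, hjn⟩ : ∃ jn : ℕ, j = -(jn : ℤ) - 1 := ⟨(-j-1).toNat, by omega⟩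
      subst hjn
      have hjn2 : jn < N := by omega
      have hk2 : P - k < P := by omega
      have hpos := pos_case N P a' a b' b jn (P - k) hjn2 hk2
      have hL : (P : ℤ) * (-(jn : ℤ) - 1) + (k : ℕ) = -((P * jn + (P - k) : ℕ) : ℤ) := by
        push_cast [Nat.le_of_lt hk]; ring
      rw [hL, acc_conj, hpos, map_add, map_mul, map_mul]
      have c1 : (starRingEnd ℂ) (acc N a' a ((jn : ℕ) : ℤ)) = acc N a a' (-(jn : ℤ)) :=
        (acc_conj N jn a a').symm
      have c2 : (starRingEnd ℂ) (acc P b' b (((P - k : ℕ)) : ℤ)) =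
          acc P b b' ((k : ℤ) - P) := by
        rw [show (k : ℤ) - P = -(((P - k : ℕ)) : ℤ) by push_cast [Nat.le_of_lt hk]; ring]
        exact (acc_conj P (P - k) b b').symm
      have c3 : (starRingEnd ℂ) (acc N a' a (((jn : ℕ) : ℤ) + 1)) =
          acc N a a' (-(jn : ℤ) - 1) := by
        rw [show ((jn : ℤ)) + 1 = (((jn + 1 : ℕ)) : ℤ) by push_cast; ring,
          show -(jn : ℤ) - 1 = -(((jn + 1 : ℕ)) : ℤ) by push_cast; ring]
        exact (acc_conj N (jn + 1) a a').symm
      have c4 : (starRingEnd ℂ) (acc P b' b ((((P - k : ℕ)) : ℤ) - P)) =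
          acc P b b' (k : ℤ) := by
        rw [show (((P - k : ℕ)) : ℤ) - P = -((k : ℕ) : ℤ) by push_cast [Nat.le_of_lt hk]; ring,
          acc_conj P k b' b]
        simp
      rw [c1, c2, c3, c4]
      have e1 : -(jn : ℤ) = (-(jn : ℤ) - 1) + 1 := by ring
      rw [← e1]
      ring
end

section
/- Let (s,t) be a Golay complementary pair of length N (i.e., Λ(s)(τ) + Λ(t)(τ) = 0 for all τ ≠ 0, entries unimodular) and b a unimodular sequence of length P. Then (s⊗b, t⊗b) is a type-II Z-complementary pair of length NP with ZCZ width NP-P+1: Λ(s⊗b)(τ) + Λ(t⊗b)(τ) = 0 for all τ with P-1 < |τ| < NP. -/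
open Finset

/-! Write a nonnegative shift as `q * P + r` with `r < P`. Splitting the correlation sum of
`a ⊗ b` into blocks of length `P` gives
`Λ(a ⊗ b)(qP + r) = Λ(a)(q) Λ(b)(r) + Λ(a)(q + 1) Λ(b)(r - P)`.
For `|τ| ≥ P` we have `q ≥ 1`, so adding this for `a = s` and `a = t` leaves only Golay sums
at the nonzero shifts `q` and `q + 1`, which vanish. Negative shifts follow by conjugate symmetry. -/

open ComplexConjugate

lemma aac_natCast (L : ℕ) (x : ℕ → ℂ) (k : ℕ) :
    aac L x k = ∑ i ∈ range (L - k), x (i + k) * conj (x i) := by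
  unfold aac acc
  by_cases hk : k < L
  · simp [hk]
  · simp [hk, Nat.sub_eq_zero_of_le (not_lt.mp hk)]

lemma aac_neg_natCast_eq_sum (L : ℕ) (x : ℕ → ℂ) (k : ℕ) :
    aac L x (-(k : ℤ)) = ∑ i ∈ range (L - k), x i * conj (x (i + k)) := by
  rcases Nat.eq_zero_or_pos k with rfl | hk0
  · simp only [Nat.cast_zero, neg_zero, add_zero]
    exact (aac_natCast L x 0).trans (sum_congr rfl fun i _ => by simp)
  unfold aac acc
  by_cases hk : k < L
  · simp [hk, hk0, hk0.ne']
  · simp [hk, hk0.ne', Nat.sub_eq_zero_of_le (not_lt.mp hk)]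

lemma aac_neg_natCast (L : ℕ) (x : ℕ → ℂ) (k : ℕ) :
    aac L x (-(k : ℤ)) = conj (aac L x k) := by
  simp only [aac_neg_natCast_eq_sum, aac_natCast, map_sum, map_mul, Complex.conj_conj, mul_comm]

lemma kron_mul_add (P : ℕ) (a b : ℕ → ℂ) (m : ℕ) {p : ℕ} (hp : p < P) :
    kron P a b (m * P + p) = a m * b p := by
  simp only [kron, Nat.add_comm (m * P), Nat.add_mul_div_right _ _ (p.zero_le.trans_lt hp),
    Nat.div_eq_of_lt hp, zero_add, Nat.add_mul_mod_self_right, Nat.mod_eq_of_lt hp]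

lemma sum_range_blocks {M : Type*} [AddCommMonoid M] (g : ℕ → M) (K c r : ℕ) :
    ∑ i ∈ range (K * (c + r) + c), g i =
      ∑ m ∈ range (K + 1), ∑ p ∈ range c, g (m * (c + r) + p) +
        ∑ m ∈ range K, ∑ j ∈ range r, g (m * (c + r) + c + j) := by
  induction K with
  | zero => simp
  | succ K ih =>
    rw [show (K + 1) * (c + r) + c = (K * (c + r) + c) + r + c by ring, sum_range_add,
      sum_range_add, ih, sum_range_succ _ (K + 1),
      sum_range_succ (fun m => ∑ j ∈ range r, g (m * (c + r) + c + j)) K]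
    have next_block (p : ℕ) : K * (c + r) + c + r + p = (K + 1) * (c + r) + p := by ring
    simp only [next_block]
    abel

theorem aac_kron (N P : ℕ) (a b : ℕ → ℂ) (q : ℕ) {r : ℕ} (hr : r < P) :
    aac (N * P) (kron P a b) ((q * P + r : ℕ) : ℤ) =
      aac N a q * aac P b r + aac N a (q + 1 : ℕ) * aac P b ((r : ℤ) - P) := by
  rcases le_or_gt N q with hNq | hqN
  · have hNPq : N * P ≤ q * P + r := (Nat.mul_le_mul_right P hNq).trans le_self_add
    rw [aac_natCast, aac_natCast, aac_natCast, aac_natCast, Nat.sub_eq_zero_of_le hNPq,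
      Nat.sub_eq_zero_of_le hNq, Nat.sub_eq_zero_of_le (hNq.trans (q.le_add_right 1))]
    simp
  obtain ⟨c, rfl⟩ : ∃ c, P = c + r := ⟨P - r, by omega⟩
  obtain ⟨K, hK⟩ : ∃ K, N = q + K + 1 := ⟨N - q - 1, by omega⟩
  have hlen : N * (c + r) - (q * (c + r) + r) = K * (c + r) + c := by
    subst hK; rw [Nat.sub_eq_of_eq_add]; ring
  rw [show (r : ℤ) - ((c + r : ℕ) : ℤ) = -(c : ℤ) by push_cast; ring, aac_natCast, hlen,
    sum_range_blocks, aac_natCast, aac_natCast, aac_natCast, aac_neg_natCast_eq_sum,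
    show N - q = K + 1 by omega, show N - (q + 1) = K by omega,
    show c + r - r = c by omega, show c + r - c = r by omega, sum_mul_sum, sum_mul_sum]
  congr 1
  · refine sum_congr rfl fun m _ => sum_congr rfl fun p hp => ?_
    have hp : p < c := mem_range.mp hp
    rw [show m * (c + r) + p + (q * (c + r) + r) = (m + q) * (c + r) + (p + r) by ring,
      kron_mul_add _ _ _ _ (by omega), kron_mul_add _ _ _ _ (by omega), map_mul]
    ring
  · refine sum_congr rfl fun m _ => sum_congr rfl fun j hj => ?_
    have hj : j < r := mem_range.mp hj
    rw [show m * (c + r) + c + j + (q * (c + r) + r) = (m + (q + 1)) * (c + r) + j by ring,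
      add_assoc (m * (c + r)), kron_mul_add _ _ _ _ (by omega),
      kron_mul_add _ _ _ _ (by omega), map_mul, add_comm c j]
    ring

theorem aac_kron_add_aac_kron_eq_zero {N P : ℕ} {s t : ℕ → ℂ}
    (hGCP : ∀ τ : ℤ, τ ≠ 0 → aac N s τ + aac N t τ = 0) (b : ℕ → ℂ) {u : ℕ} (hPu : P ≤ u) :
    aac (N * P) (kron P s b) u + aac (N * P) (kron P t b) u = 0 := by
  rcases P.eq_zero_or_pos with rfl | hP
  · simp [aac_natCast]
  have hq : (u / P : ℕ) ≠ 0 := (Nat.div_pos hPu hP).ne'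
  rw [← Nat.div_add_mod u P, mul_comm P, aac_kron _ _ _ _ _ (Nat.mod_lt u hP),
    aac_kron _ _ _ _ _ (Nat.mod_lt u hP)]
  linear_combination aac P b (u % P : ℕ) * hGCP (u / P : ℕ) (by exact_mod_cast hq) +
    aac P b ((u % P : ℕ) - P) * hGCP (u / P + 1 : ℕ) (by positivity)

theorem stmt4_general (N P : ℕ) (s t : ℕ → ℂ)
    (hGCP : ∀ τ : ℤ, τ ≠ 0 → aac N s τ + aac N t τ = 0)
    (b : ℕ → ℂ) :
    ∀ τ : ℤ, (P : ℤ) - 1 < |τ| → |τ| < (N : ℤ) * P →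
      aac (N * P) (kron P s b) τ + aac (N * P) (kron P t b) τ = 0 := by
  intro τ hτ _
  obtain ⟨u, rfl | rfl⟩ := Int.eq_nat_or_neg τ
  · rw [Nat.abs_cast] at hτ
    exact aac_kron_add_aac_kron_eq_zero hGCP b (by omega)
  · rw [abs_neg, Nat.abs_cast] at hτ
    rw [aac_neg_natCast, aac_neg_natCast, ← map_add,
      aac_kron_add_aac_kron_eq_zero hGCP b (by omega), map_zero]

theorem stmt4 (N P : ℕ) (s t : ℕ → ℂ)
    (hs : ∀ i < N, ‖s i‖ = 1) (ht : ∀ i < N, ‖t i‖ = 1)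
    (hGCP : ∀ τ : ℤ, τ ≠ 0 → aac N s τ + aac N t τ = 0)
    (b : ℕ → ℂ) (hb : ∀ p < P, ‖b p‖ = 1) :
    ∀ τ : ℤ, (P : ℤ) - 1 < |τ| → |τ| < (N : ℤ) * P →
      aac (N * P) (kron P s b) τ + aac (N * P) (kron P t b) τ = 0 :=
  stmt4_general N P s t hGCP b
end

section
/- The codes {Z_1,Z_2,Z_3,Z_4} given explicitly in Table II (each a 4×24 matrix of ±1 obtained as C_i ⊗ (1,1,-1) from the binary (4,4,8)-CCC of Table I) form a binary type-II (4,4,22,24)-ZCCS: for each i, Λ(Z_i)(τ) = 0 for all 2 < |τ| < 24, Λ(Z_i)(0)=96, Λ(Z_i)(2) = -32, Λ(Z_i)(1)=0; and Λ(Z_i,Z_j)(τ)=0 for all τ when i ≠ j. -/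
open Finset

/-- Extend a `Fin 8`-vector to a sequence `ℕ → ℂ` (zero beyond index 7). -/
noncomputable def row8 (v : Fin 8 → ℂ) : ℕ → ℂ := fun n => if h : n < 8 then v ⟨n, h⟩ else 0

/-- The binary (4,4,8)-CCC of Table I (`+` = 1, `-` = -1). -/
noncomputable def Ctab : Fin 4 → Fin 4 → ℕ → ℂ :=
  ![![row8 ![-1, 1, 1, 1, 1, 1, 1,-1],
     row8 ![-1,-1, 1,-1, 1,-1, 1, 1],
     row8 ![-1, 1,-1,-1, 1, 1,-1, 1],
     row8 ![ 1, 1, 1,-1,-1, 1, 1, 1]],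
    ![row8 ![-1,-1, 1,-1, 1,-1, 1, 1],
     row8 ![-1, 1, 1, 1, 1, 1, 1,-1],
     row8 ![-1,-1,-1, 1, 1,-1,-1,-1],
     row8 ![ 1,-1, 1, 1,-1,-1, 1,-1]],
    ![row8 ![-1, 1,-1,-1, 1, 1,-1, 1],
     row8 ![ 1, 1, 1,-1,-1, 1, 1, 1],
     row8 ![-1, 1, 1, 1, 1, 1, 1,-1],
     row8 ![-1,-1, 1,-1, 1,-1, 1, 1]],
    ![row8 ![ 1, 1, 1,-1,-1, 1, 1, 1],
     row8 ![-1, 1,-1,-1, 1, 1,-1, 1],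
     row8 ![ 1, 1,-1, 1,-1, 1,-1,-1],
     row8 ![ 1,-1,-1,-1,-1,-1,-1, 1]]]

/-- The Barker sequence `b = (1, 1, -1)` of length 3. -/
noncomputable def bseq : ℕ → ℂ := fun n => if n = 0 then 1 else if n = 1 then 1 else if n = 2 then -1 else 0

/-- The codes of Table II: `Z_i = C_i ⊗ b`. -/
noncomputable def Ztab : Fin 4 → Fin 4 → ℕ → ℂ := fun i ν => kron 3 (Ctab i ν) bseq


/- ### Auxiliary integer-valued tables and correlations ### -/

def ctabL : List (List (List ℤ)) :=
  [[[-1,1,1,1,1,1,1,-1],[-1,-1,1,-1,1,-1,1,1],[-1,1,-1,-1,1,1,-1,1],[1,1,1,-1,-1,1,1,1]],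
   [[-1,-1,1,-1,1,-1,1,1],[-1,1,1,1,1,1,1,-1],[-1,-1,-1,1,1,-1,-1,-1],[1,-1,1,1,-1,-1,1,-1]],
   [[-1,1,-1,-1,1,1,-1,1],[1,1,1,-1,-1,1,1,1],[-1,1,1,1,1,1,1,-1],[-1,-1,1,-1,1,-1,1,1]],
   [[1,1,1,-1,-1,1,1,1],[-1,1,-1,-1,1,1,-1,1],[1,1,-1,1,-1,1,-1,-1],[1,-1,-1,-1,-1,-1,-1,1]]]

def cfun (i ν : Fin 4) (m : ℕ) : ℤ := ((ctabL.getD i.val []).getD ν.val []).getD m 0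
def bfun (n : ℕ) : ℤ := ([1,1,-1] : List ℤ).getD n 0
def zfun (i ν : Fin 4) (n : ℕ) : ℤ := cfun i ν (n / 3) * bfun (n % 3)
def iaccP (t : ℕ) (f g : ℕ → ℤ) : ℤ := ∑ k ∈ Finset.range (24 - t), f (k + t) * g k
def iaccN (t : ℕ) (f g : ℕ → ℤ) : ℤ := ∑ k ∈ Finset.range (24 - t), f k * g (k + t)
def iccsP (i j : Fin 4) (t : ℕ) : ℤ := ∑ ν : Fin 4, iaccP t (zfun i ν) (zfun j ν)
def iccsN (i j : Fin 4) (t : ℕ) : ℤ := ∑ ν : Fin 4, iaccN t (zfun i ν) (zfun j ν)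

lemma key : ∀ i j : Fin 4, ∀ t : Fin 24,
    (iccsP i j t = if i = j ∧ t.val = 0 then 96 else if i = j ∧ t.val = 2 then -32 else 0) ∧
    (iccsN i j t = if i = j ∧ t.val = 0 then 96 else if i = j ∧ t.val = 2 then -32 else 0) := by
  decide

lemma bseq_eq (n : ℕ) : bseq n = (bfun n : ℂ) := by
  rcases n with _ | _ | _ | n <;> simp [bseq, bfun]

lemma ctab_eq (i ν : Fin 4) (m : ℕ) : Ctab i ν m = (cfun i ν m : ℂ) := by
  rcases lt_or_ge m 8 with h | h
  · fin_cases i <;> fin_cases ν <;> interval_cases m <;>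
      norm_num [Ctab, row8, cfun, ctabL]
  · have h8 : ¬ m < 8 := by omega
    have hlen : ∀ i ν : Fin 4, ((ctabL.getD i.val []).getD ν.val []).length = 8 := by decide
    have hc : cfun i ν m = 0 := List.getD_eq_default _ _ (by rw [hlen]; omega)
    rw [hc]
    obtain ⟨v, hv⟩ : ∃ v, Ctab i ν = row8 v := by
      fin_cases i <;> fin_cases ν <;> exact ⟨_, rfl⟩
    rw [hv]
    simp [row8, h8]

lemma ztab_eq (i ν : Fin 4) (n : ℕ) : Ztab i ν n = (zfun i ν n : ℂ) := by
  simp only [Ztab, kron, zfun, ctab_eq, bseq_eq, Int.cast_mul]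

lemma acc_cast_pos (f g : ℕ → ℤ) (t : ℕ) (ht : t < 24) :
    acc 24 (fun n => (f n : ℂ)) (fun n => (g n : ℂ)) (t : ℤ) = ((iaccP t f g : ℤ) : ℂ) := by
  rw [acc, if_pos ⟨Int.ofNat_nonneg t, by exact_mod_cast ht⟩]
  simp only [Int.toNat_natCast, map_intCast, iaccP]
  push_cast
  rfl

lemma acc_cast_neg (f g : ℕ → ℤ) (t : ℕ) (ht0 : 0 < t) (ht : t < 24) :
    acc 24 (fun n => (f n : ℂ)) (fun n => (g n : ℂ)) (-(t : ℤ)) = ((iaccN t f g : ℤ) : ℂ) := by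
  rw [acc, if_neg (by omega), if_pos (by constructor <;> omega)]
  simp only [neg_neg, Int.toNat_natCast, map_intCast, iaccN]
  push_cast
  rfl

lemma acc_big (x y : ℕ → ℂ) (τ : ℤ) (h : 24 ≤ |τ|) : acc 24 x y τ = 0 := by
  rcases le_abs.mp h with h' | h' <;>
    rw [acc, if_neg (by omega), if_neg (by omega)]

lemma ccs_big (A B : Fin 4 → ℕ → ℂ) (τ : ℤ) (h : 24 ≤ |τ|) : ccs 24 A B τ = 0 := by
  unfold ccs
  exact Finset.sum_eq_zero fun ν _ => acc_big _ _ _ h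

lemma ccs_cast_pos (i j : Fin 4) (t : ℕ) (ht : t < 24) :
    ccs 24 (Ztab i) (Ztab j) (t : ℤ) = ((iccsP i j t : ℤ) : ℂ) := by
  unfold ccs iccsP
  push_cast
  refine Finset.sum_congr rfl fun ν _ => ?_
  rw [funext (ztab_eq i ν), funext (ztab_eq j ν), acc_cast_pos _ _ t ht]

lemma ccs_cast_neg (i j : Fin 4) (t : ℕ) (ht0 : 0 < t) (ht : t < 24) :
    ccs 24 (Ztab i) (Ztab j) (-(t : ℤ)) = ((iccsN i j t : ℤ) : ℂ) := by
  unfold ccs iccsN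
  push_cast
  refine Finset.sum_congr rfl fun ν _ => ?_
  rw [funext (ztab_eq i ν), funext (ztab_eq j ν), acc_cast_neg _ _ t ht0 ht]

lemma ccs_val (i j : Fin 4) (τ : ℤ) (h : |τ| < 24) :
    ccs 24 (Ztab i) (Ztab j) τ =
      if i = j ∧ τ = 0 then 96 else if i = j ∧ |τ| = 2 then -32 else 0 := by
  obtain ⟨hl, hr⟩ := abs_lt.mp h
  rcases le_or_gt 0 τ with hτ | hτ
  · obtain ⟨t, rfl⟩ : ∃ t : ℕ, τ = (t : ℤ) := ⟨τ.toNat, by omega⟩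
    have ht24 : t < 24 := by omega
    rw [ccs_cast_pos i j t ht24, (key i j ⟨t, ht24⟩).1]
    by_cases hij : i = j
    · rcases eq_or_ne t 0 with rfl | h0
      · norm_num [hij]
      · rcases eq_or_ne t 2 with rfl | h2
        · norm_num [hij]
        · have c0 : ¬ (t : ℤ) = 0 := by omega
          have c2 : ¬ (t : ℤ) = 2 := by omega
          simp [hij, h0, h2, c0, c2, Int.abs_natCast]
    · simp [hij]
  · obtain ⟨t, rfl⟩ : ∃ t : ℕ, τ = -(t : ℤ) := ⟨(-τ).toNat, by omega⟩
    have ht0 : 0 < t := by omega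
    have ht24 : t < 24 := by omega
    rw [ccs_cast_neg i j t ht0 ht24, (key i j ⟨t, ht24⟩).2]
    by_cases hij : i = j
    · rcases eq_or_ne t 2 with rfl | h2
      · norm_num [hij]
      · have h0 : t ≠ 0 := by omega
        have c0 : ¬ -(t : ℤ) = 0 := by omega
        have c2 : ¬ (t : ℤ) = 2 := by omega
        simp [hij, h0, h2, c0, c2, abs_neg, Int.abs_natCast]
    · simp [hij]

theorem stmt14 :
    (∀ i : Fin 4, ∀ τ : ℤ, 2 < |τ| → |τ| < 24 → ccs 24 (Ztab i) (Ztab i) τ = 0) ∧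
    (∀ i : Fin 4, ccs 24 (Ztab i) (Ztab i) 0 = 96) ∧
    (∀ i : Fin 4, ccs 24 (Ztab i) (Ztab i) 2 = -32) ∧
    (∀ i : Fin 4, ccs 24 (Ztab i) (Ztab i) 1 = 0) ∧
    (∀ i j : Fin 4, i ≠ j → ∀ τ : ℤ, ccs 24 (Ztab i) (Ztab j) τ = 0) := by
  refine ⟨fun i τ h2 h24 => ?_, fun i => ?_, fun i => ?_, fun i => ?_, fun i j hij τ => ?_⟩
  · rw [ccs_val i i τ h24]
    have h0 : ¬ τ = 0 := by intro hh; rw [hh] at h2; simp at h2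
    have ha : ¬ |τ| = 2 := by intro hh; omega
    simp [h0, ha]
  · rw [ccs_val i i 0 (by norm_num)]; norm_num
  · rw [ccs_val i i 2 (by norm_num)]; norm_num
  · rw [ccs_val i i 1 (by norm_num)]; norm_num
  · rcases le_or_gt 24 |τ| with h | h
    · exact ccs_big _ _ _ h
    · rw [ccs_val i j τ h]; simp [hij]
end
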